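/- arXiv:2006.01556 — 3 statements merged into one kernel-verified Lean document; each statement's English description precedes it below -/
import Mathlib

section
/- Let f : X × Y → ℝ and define recursively r_0 = f and r_{k+1}(x,y) = r_k(x,y) - r_k(x_{k+1}, y) · r_k(x, y_{k+1}) / r_k(x_{k+1}, y_{k+1}), where r_k(x_{k+1}, y_{k+1}) ≠ 0 at each step. Then for the matrix C_k with entries (C_k)_{ij} = f(x_i, y_j), 1 ≤ i,j ≤ k, one has det C_k = r_0(x_1,y_1) · r_1(x_2,y_2) · ... · r_{k-1}(x_k,y_k); in particular det C_k ≠ 0. -/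
/-!
Eliminating the first column of `C_k` with the pivot `f(x₁, y₁)` leaves the Schur complement
`r₁(x_{i+1}, y_{j+1})`, `1 ≤ i, j < k`: this is exactly one step of the cross-approximation
recurrence. So `det C_k = r₀(x₁, y₁) · det` of the residual matrix of `r₁` on the remaining
points, and induction on `k` (shifting the pivot sequences by one) gives the product of pivots.
-/

open Matrix

theorem Matrix.det_succ_eq_mul_det_schurComplement {K : Type*} [Field K] {n : ℕ}
    (M : Matrix (Fin (n + 1)) (Fin (n + 1)) K) (h : M 0 0 ≠ 0) :
    M.det = M 0 0 *
      (of fun i j : Fin n => M i.succ j.succ - M i.succ 0 * M 0 j.succ / M 0 0).det := by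
  set B : Matrix (Fin (n + 1)) (Fin (n + 1)) K :=
    of (Fin.cons (M 0) fun i j => M i.succ j - M i.succ 0 / M 0 0 * M 0 j)
  have hBM : M.det = B.det :=
    det_eq_of_forall_row_eq_smul_add_const (Fin.cons 0 fun i => M i.succ 0 / M 0 0) 0 rfl
      fun i j => by cases i using Fin.cases <;> simp [B]
  have hB_col : ∀ i : Fin n, B i.succ 0 = 0 := fun i => by
    simp [B, div_mul_cancel₀ _ h]
  rw [hBM, det_succ_column_zero, Fin.sum_univ_succ]
  simp only [hB_col, mul_zero, zero_mul, Finset.sum_const_zero, add_zero]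
  congr 1
  · simp [B]
  · congr 1
    ext i j
    simp only [B, Fin.succAbove_zero, submatrix_apply, of_apply, Fin.cons_succ]
    ring

theorem det_crossApproxResidual_eq_prod_pivots {X Y : Type*} (k : ℕ)
    (x : ℕ → X) (y : ℕ → Y) (r : ℕ → X → Y → ℝ)
    (hrec : ∀ j, r (j + 1) = fun a b =>
      r j a b - r j (x (j + 1)) b * r j a (y (j + 1)) / r j (x (j + 1)) (y (j + 1)))
    (hpiv : ∀ j < k, r j (x (j + 1)) (y (j + 1)) ≠ 0) :
    (of fun i j : Fin k => r 0 (x (i.val + 1)) (y (j.val + 1))).det =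
      ∏ j ∈ Finset.range k, r j (x (j + 1)) (y (j + 1)) := by
  induction k generalizing x y r with
  | zero => simp
  | succ k ih =>
    have hschur : (of fun i j : Fin k => r 0 (x (i.val + 2)) (y (j.val + 2)) -
        r 0 (x (i.val + 2)) (y 1) * r 0 (x 1) (y (j.val + 2)) / r 0 (x 1) (y 1)) =
        of fun i j : Fin k => r 1 (x (i.val + 2)) (y (j.val + 2)) := by
      ext i j
      rw [hrec 0]
      simp only [of_apply]
      ring
    have hshift := ih (fun n => x (n + 1)) (fun n => y (n + 1)) (fun n => r (n + 1))
      (fun j => hrec (j + 1)) (fun j hj => hpiv (j + 1) (by omega))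
    rw [det_succ_eq_mul_det_schurComplement _ (by simpa using hpiv 0 k.succ_pos)]
    simp only [of_apply, Fin.val_succ, Fin.val_zero, hschur]
    rw [hshift, Finset.prod_range_succ', mul_comm]

theorem aca_det_identity {X Y : Type*} (f : X → Y → ℝ) (k : ℕ)
    (x : ℕ → X) (y : ℕ → Y) (r : ℕ → X → Y → ℝ)
    (hr0 : r 0 = f)
    (hrec : ∀ j, r (j + 1) = fun a b =>
      r j a b - r j (x (j + 1)) b * r j a (y (j + 1)) / r j (x (j + 1)) (y (j + 1)))
    (hpiv : ∀ j < k, r j (x (j + 1)) (y (j + 1)) ≠ 0) :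
    (Matrix.of fun i j : Fin k => f (x (i.val + 1)) (y (j.val + 1))).det =
        ∏ j ∈ Finset.range k, r j (x (j + 1)) (y (j + 1)) ∧
      (Matrix.of fun i j : Fin k => f (x (i.val + 1)) (y (j.val + 1))).det ≠ 0 := by
  subst hr0
  have hdet := det_crossApproxResidual_eq_prod_pivots k x y r hrec hpiv
  exact ⟨hdet, hdet ▸ Finset.prod_ne_zero_iff.mpr fun j hj =>
    hpiv j (Finset.mem_range.mp hj)⟩
end

section
/- With the recursion r_0 = f, r_{k+1}(x,y) = r_k(x,y) - r_k(x_{k+1},y)·r_k(x,y_{k+1})/r_k(x_{k+1},y_{k+1}) (all pivots r_j(x_{j+1},y_{j+1}) nonzero), the function s_k := f - r_k satisfies the interpolation property s_k(x_i, y) = f(x_i, y) for all i = 1,...,k and all y, and s_k(x, y_j) = f(x, y_j) for all j = 1,...,k and all x. -/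
/-!
Each step of cross approximation subtracts a rank-one function that agrees with the current
residual on the new pivot's row and column, so the new residual vanishes there. A row (or column)
on which the residual already vanishes contributes a zero factor to the subtracted term, so it
stays zero in all later steps. Hence `r k` vanishes on all pivot rows and columns, i.e.
`f - r k` interpolates `f` there. Columns reduce to rows by transposing.
-/

namespace CrossApproximation

variable {X Y : Type*}

noncomputable def crossUpdate (g : X → Y → ℝ) (p : X) (q : Y) : X → Y → ℝ :=
  fun a b => g a b - g p b * g a q / g p q

theorem crossUpdate_pivot_row {g : X → Y → ℝ} {p : X} {q : Y} (hpq : g p q ≠ 0) (b : Y) :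
    crossUpdate g p q p b = 0 := by
  simp only [crossUpdate, mul_div_cancel_right₀ _ hpq, sub_self]

theorem crossUpdate_eq_zero_of_row_eq_zero {g : X → Y → ℝ} {a : X} (ha : ∀ b, g a b = 0)
    (p : X) (q : Y) (b : Y) : crossUpdate g p q a b = 0 := by
  simp only [crossUpdate, ha, mul_zero, zero_div, sub_zero]

theorem flip_crossUpdate (g : X → Y → ℝ) (p : X) (q : Y) :
    flip (crossUpdate g p q) = crossUpdate (flip g) q p := by
  funext b a
  simp only [flip, crossUpdate, mul_comm]

theorem residual_pivot_row_eq_zero {k : ℕ} {x : ℕ → X} {y : ℕ → Y} {r : ℕ → X → Y → ℝ}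
    (hrec : ∀ j, r (j + 1) = crossUpdate (r j) (x (j + 1)) (y (j + 1)))
    (hpiv : ∀ j < k, r j (x (j + 1)) (y (j + 1)) ≠ 0) :
    ∀ i, 1 ≤ i → i ≤ k → ∀ b, r k (x i) b = 0 := by
  induction k with
  | zero => omega
  | succ k ih =>
    intro i hi1 hik b
    rw [hrec k]
    rcases Nat.lt_or_ge i (k + 1) with hlt | hge
    · exact crossUpdate_eq_zero_of_row_eq_zero
        (ih (fun j hj => hpiv j (by omega)) i hi1 (by omega)) _ _ b
    · obtain rfl : i = k + 1 := by omega
      exact crossUpdate_pivot_row (hpiv k k.lt_succ_self) b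

theorem residual_pivot_col_eq_zero {k : ℕ} {x : ℕ → X} {y : ℕ → Y} {r : ℕ → X → Y → ℝ}
    (hrec : ∀ j, r (j + 1) = crossUpdate (r j) (x (j + 1)) (y (j + 1)))
    (hpiv : ∀ j < k, r j (x (j + 1)) (y (j + 1)) ≠ 0) :
    ∀ j, 1 ≤ j → j ≤ k → ∀ a, r k a (y j) = 0 :=
  residual_pivot_row_eq_zero (r := fun j => flip (r j))
    (fun j => by rw [hrec j, flip_crossUpdate]) hpiv

end CrossApproximation

open CrossApproximation in
theorem aca_interpolation_property_general {X Y : Type*} (f : X → Y → ℝ) (k : ℕ)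
    (x : ℕ → X) (y : ℕ → Y) (r : ℕ → X → Y → ℝ)
    (hrec : ∀ j, r (j + 1) = fun a b =>
      r j a b - r j (x (j + 1)) b * r j a (y (j + 1)) / r j (x (j + 1)) (y (j + 1)))
    (hpiv : ∀ j < k, r j (x (j + 1)) (y (j + 1)) ≠ 0) :
    (∀ i, 1 ≤ i → i ≤ k → ∀ b : Y, f (x i) b - r k (x i) b = f (x i) b) ∧
      (∀ j, 1 ≤ j → j ≤ k → ∀ a : X, f a (y j) - r k a (y j) = f a (y j)) :=
  ⟨fun i hi1 hik b => by rw [residual_pivot_row_eq_zero hrec hpiv i hi1 hik b, sub_zero],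
    fun j hj1 hjk a => by rw [residual_pivot_col_eq_zero hrec hpiv j hj1 hjk a, sub_zero]⟩

theorem aca_interpolation_property {X Y : Type*} (f : X → Y → ℝ) (k : ℕ)
    (x : ℕ → X) (y : ℕ → Y) (r : ℕ → X → Y → ℝ)
    (hr0 : r 0 = f)
    (hrec : ∀ j, r (j + 1) = fun a b =>
      r j a b - r j (x (j + 1)) b * r j a (y (j + 1)) / r j (x (j + 1)) (y (j + 1)))
    (hpiv : ∀ j < k, r j (x (j + 1)) (y (j + 1)) ≠ 0) :
    (∀ i, 1 ≤ i → i ≤ k → ∀ b : Y, f (x i) b - r k (x i) b = f (x i) b) ∧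
      (∀ j, 1 ≤ j → j ≤ k → ∀ a : X, f a (y j) - r k a (y j) = f a (y j)) :=
  aca_interpolation_property_general f k x y r hrec hpiv
end

section
/- Let pivots be chosen by the partial pivoting rule |r_{j-1}(x_j, y_j)| ≥ |r_{j-1}(x_j, y)| for all y ∈ Y, j = 1,...,k, in the cross approximation recursion. Then |det C_k^{(i)}(y)| ≤ 2^{k-i} |det C_k| for all 1 ≤ i ≤ k and y ∈ Y. -/
/-!
Unrolling the recursion gives `f = r_k + ∑_{m<k} u_m ⊗ w_m`, where `u_m = r_m(·, y_{m+1})` and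
`w_m = r_m(x_{m+1}, ·) / r_m(x_{m+1}, y_{m+1})`. The residual `r_k` vanishes on the pivot rows
`x_1, …, x_k`, so `C = U W` and `C^{(i)}(b) = U W^{(i)}(b)` with `U = [u_m(x_p)]`,
`W = [w_m(y_q)]` and `W^{(i)}(b)` the matrix `W` with column `i` replaced by `(w_m(b))_m`.
Since `r_m` also vanishes on the earlier pivot columns, `W` is unit upper triangular, and the
pivoting rule makes all entries of `W^{(i)}(b)` at most `1` in absolute value. By Cramer's rule
`det W^{(i)}(b) = t_i` where `W t = (w_m(b))_m`, and back substitution gives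
`|t_m| ≤ 1 + ∑_{q>m} |t_q|`, hence `|t_m| ≤ 2^{k-1-m}`.
-/

open Finset Matrix

section BackSubstitution

variable {K : Type*} [CommRing K] [LinearOrder K] [IsStrictOrderedRing K]

theorem sum_Ico_le_two_pow_sub_one {a : ℕ → K} {n : ℕ}
    (h : ∀ m < n, a m ≤ 1 + ∑ q ∈ Ioo m n, a q) {d : ℕ} (hd : d ≤ n) :
    ∑ q ∈ Ico (n - d) n, a q ≤ 2 ^ d - 1 := by
  induction d with
  | zero => simp
  | succ d ih =>
    have hm : n - (d + 1) < n := by omega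
    have hhead := h _ hm
    rw [← Ico_add_one_left_eq_Ioo, show n - (d + 1) + 1 = n - d by omega] at hhead
    rw [sum_eq_sum_Ico_succ_bot hm, show n - (d + 1) + 1 = n - d by omega, pow_succ]
    linarith [ih (by omega)]

theorem le_two_pow_of_le_one_add_sum_Ioo {a : ℕ → K} {n : ℕ}
    (h : ∀ m < n, a m ≤ 1 + ∑ q ∈ Ioo m n, a q) {m : ℕ} (hm : m < n) :
    a m ≤ 2 ^ (n - 1 - m) := by
  have htail := sum_Ico_le_two_pow_sub_one h (d := n - 1 - m) (by omega)
  rw [show n - (n - 1 - m) = m + 1 by omega, Ico_add_one_left_eq_Ioo] at htail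
  linarith [h m hm]

theorem Fin.le_two_pow_of_le_one_add_sum_Ioi {n : ℕ} {a : Fin n → K}
    (h : ∀ m, a m ≤ 1 + ∑ q ∈ Ioi m, a q) (m : Fin n) :
    a m ≤ 2 ^ (n - 1 - m) := by
  let a' : ℕ → K := fun p => if hp : p < n then a ⟨p, hp⟩ else 0
  have hsum (m : Fin n) : ∑ q ∈ Ioi m, a q = ∑ q ∈ Ioo (m : ℕ) n, a' q := by
    rw [← Fin.map_valEmbedding_Ioi, sum_map]
    simp [a']
  have ha' (p : ℕ) (hp : p < n) : a' p ≤ 1 + ∑ q ∈ Ioo p n, a' q := by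
    simpa [a', hp, hsum] using h ⟨p, hp⟩
  simpa [a'] using le_two_pow_of_le_one_add_sum_Ioo ha' m.isLt

theorem Matrix.det_eq_one_of_isUpperTriangular {R n : Type*} [CommRing R] [Fintype n]
    [DecidableEq n] [LinearOrder n] {W : Matrix n n R} (hW : W.IsUpperTriangular)
    (hdiag : ∀ p, W p p = 1) : W.det = 1 := by
  simp [det_of_isUpperTriangular hW, hdiag]

theorem Matrix.abs_le_one_add_sum_Ioi_of_mulVec_eq {n : ℕ} {W : Matrix (Fin n) (Fin n) K}
    (hW : W.IsUpperTriangular) (hdiag : ∀ p, W p p = 1) (hbnd : ∀ p q, |W p q| ≤ 1)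
    {t c : Fin n → K} (hc : ∀ p, |c p| ≤ 1) (hWt : W *ᵥ t = c) (m : Fin n) :
    |t m| ≤ 1 + ∑ q ∈ Ioi m, |t q| := by
  have hrow : c m = t m + ∑ q ∈ Ioi m, W m q * t q := by
    rw [← hWt, mulVec, dotProduct, ← sum_subset (subset_univ (Ici m)), ← Ioi_insert,
      sum_insert notMem_Ioi_self, hdiag, one_mul]
    intro q _ hq
    rw [hW (lt_of_not_ge (by simpa using hq)), zero_mul]
  calc |t m| = |c m - ∑ q ∈ Ioi m, W m q * t q| := by rw [hrow, add_sub_cancel_right]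
    _ ≤ |c m| + ∑ q ∈ Ioi m, |W m q| * |t q| := by
      grw [abs_sub, abs_sum_le_sum_abs]
      simp only [abs_mul, le_refl]
    _ ≤ 1 + ∑ q ∈ Ioi m, |t q| := by
      gcongr with q
      · exact hc m
      · exact mul_le_of_le_one_left (abs_nonneg _) (hbnd m q)

theorem Matrix.abs_det_updateCol_le_two_pow {n : ℕ} {W : Matrix (Fin n) (Fin n) K}
    (hW : W.IsUpperTriangular) (hdiag : ∀ p, W p p = 1) (hbnd : ∀ p q, |W p q| ≤ 1)
    {c : Fin n → K} (hc : ∀ p, |c p| ≤ 1) (i : Fin n) :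
    |(W.updateCol i c).det| ≤ 2 ^ (n - 1 - i) := by
  have hWt : W *ᵥ W.cramer c = c := by
    rw [mulVec_cramer, det_eq_one_of_isUpperTriangular hW hdiag, one_smul]
  rw [← cramer_apply]
  exact Fin.le_two_pow_of_le_one_add_sum_Ioi
    (abs_le_one_add_sum_Ioi_of_mulVec_eq hW hdiag hbnd hc hWt) i

end BackSubstitution

section CrossApproximation

variable {K X Y : Type*} [Field K] (f : X → Y → K) (x : ℕ → X) (y : ℕ → Y)

def acaResidual : ℕ → X → Y → K
  | 0 => f
  | j + 1 => fun a b =>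
    acaResidual j a b -
      acaResidual j (x (j + 1)) b * acaResidual j a (y (j + 1)) /
        acaResidual j (x (j + 1)) (y (j + 1))

def acaPivot (j : ℕ) : K := acaResidual f x y j (x (j + 1)) (y (j + 1))

def acaPivotCol (j : ℕ) (a : X) : K := acaResidual f x y j a (y (j + 1))

def acaPivotRow (j : ℕ) (b : Y) : K := acaResidual f x y j (x (j + 1)) b / acaPivot f x y j

def acaPivotColMatrix (k : ℕ) : Matrix (Fin k) (Fin k) K :=
  of fun p m => acaPivotCol f x y m (x (p + 1))

def acaPivotRowMatrix (k : ℕ) : Matrix (Fin k) (Fin k) K :=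
  of fun m q => acaPivotRow f x y m (y (q + 1))

theorem eq_acaResidual {r : ℕ → X → Y → K} (hr0 : r 0 = f)
    (hrec : ∀ j, r (j + 1) = fun a b =>
      r j a b - r j (x (j + 1)) b * r j a (y (j + 1)) / r j (x (j + 1)) (y (j + 1))) :
    r = acaResidual f x y := by
  funext j
  induction j with
  | zero => exact hr0
  | succ j ih => rw [hrec, ih, acaResidual]

theorem acaResidual_succ_apply (j : ℕ) (a : X) (b : Y) :
    acaResidual f x y (j + 1) a b =
      acaResidual f x y j a b - acaPivotCol f x y j a * acaPivotRow f x y j b := by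
  simp only [acaResidual, acaPivotCol, acaPivotRow, acaPivot]
  ring

theorem acaResidual_add_sum (j : ℕ) (a : X) (b : Y) :
    acaResidual f x y j a b + ∑ m ∈ range j, acaPivotCol f x y m a * acaPivotRow f x y m b =
      f a b := by
  induction j with
  | zero => simp [acaResidual]
  | succ j ih => rw [sum_range_succ, acaResidual_succ_apply, ← ih]; ring

variable {f x y}

theorem acaResidual_pivot_row_eq_zero {j : ℕ} (hpiv : ∀ m < j, acaPivot f x y m ≠ 0)
    {p : ℕ} (hp : p < j) (b : Y) : acaResidual f x y j (x (p + 1)) b = 0 := by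
  induction j generalizing b with
  | zero => omega
  | succ j ih =>
    rw [acaResidual_succ_apply]
    rcases Nat.lt_succ_iff_lt_or_eq.mp hp with hp | rfl
    · have ih := ih (fun m hm => hpiv m (by omega)) hp
      rw [acaPivotCol, ih, ih, zero_mul, sub_zero]
    · rw [acaPivotCol, acaPivotRow, mul_div_left_comm, ← acaPivot, div_self (hpiv p (by omega)),
        mul_one, sub_self]

theorem acaResidual_pivot_col_eq_zero {j : ℕ} (hpiv : ∀ m < j, acaPivot f x y m ≠ 0)
    {q : ℕ} (hq : q < j) (a : X) : acaResidual f x y j a (y (q + 1)) = 0 := by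
  induction j generalizing a with
  | zero => omega
  | succ j ih =>
    rw [acaResidual_succ_apply]
    rcases Nat.lt_succ_iff_lt_or_eq.mp hq with hq | rfl
    · have ih := ih (fun m hm => hpiv m (by omega)) hq
      rw [acaPivotRow, ih, ih, zero_div, mul_zero, sub_zero]
    · rw [acaPivotCol, acaPivotRow, ← acaPivot, div_self (hpiv q (by omega)), mul_one, sub_self]

theorem acaPivotColMatrix_mulVec {k : ℕ} (hpiv : ∀ m < k, acaPivot f x y m ≠ 0) (b : Y) :
    acaPivotColMatrix f x y k *ᵥ (fun m => acaPivotRow f x y m b) =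
      fun p : Fin k => f (x (p + 1)) b := by
  funext p
  rw [← acaResidual_add_sum f x y k, acaResidual_pivot_row_eq_zero hpiv p.isLt, zero_add,
    ← Fin.sum_univ_eq_sum_range (fun m => acaPivotCol f x y m _ * acaPivotRow f x y m b)]
  rfl

theorem acaPivotColMatrix_mul_acaPivotRowMatrix {k : ℕ}
    (hpiv : ∀ m < k, acaPivot f x y m ≠ 0) :
    acaPivotColMatrix f x y k * acaPivotRowMatrix f x y k =
      of fun p q : Fin k => f (x (p + 1)) (y (q + 1)) := by
  ext p q
  exact congrFun (acaPivotColMatrix_mulVec hpiv (y (q + 1))) p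

theorem acaPivotRowMatrix_isUpperTriangular {k : ℕ} (hpiv : ∀ m < k, acaPivot f x y m ≠ 0) :
    (acaPivotRowMatrix f x y k).IsUpperTriangular := fun m q hqm => by
  rw [acaPivotRowMatrix, of_apply, acaPivotRow,
    acaResidual_pivot_col_eq_zero (fun j hj => hpiv j (hj.trans m.isLt)) (q := q) hqm, zero_div]

theorem acaPivotRowMatrix_apply_self {k : ℕ} (hpiv : ∀ m < k, acaPivot f x y m ≠ 0)
    (m : Fin k) : acaPivotRowMatrix f x y k m m = 1 :=
  div_self (hpiv m m.isLt)

theorem abs_acaPivotRow_le_one [LinearOrder K] [IsStrictOrderedRing K] {j : ℕ} {b : Y}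
    (hrule : |acaResidual f x y j (x (j + 1)) b| ≤ |acaPivot f x y j|) :
    |acaPivotRow f x y j b| ≤ 1 := by
  rw [acaPivotRow, abs_div]
  exact div_le_one_of_le₀ hrule (abs_nonneg _)

end CrossApproximation

theorem aca_pivoting_det_bound {X Y : Type*} (f : X → Y → ℝ) (k : ℕ)
    (x : ℕ → X) (y : ℕ → Y) (r : ℕ → X → Y → ℝ)
    (hr0 : r 0 = f)
    (hrec : ∀ j, r (j + 1) = fun a b =>
      r j a b - r j (x (j + 1)) b * r j a (y (j + 1)) / r j (x (j + 1)) (y (j + 1)))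
    (hpiv : ∀ j < k, r j (x (j + 1)) (y (j + 1)) ≠ 0)
    (hrule : ∀ j < k, ∀ b : Y, |r j (x (j + 1)) b| ≤ |r j (x (j + 1)) (y (j + 1))|)
    (C : Matrix (Fin k) (Fin k) ℝ)
    (hC : C = Matrix.of fun i j : Fin k => f (x (i.val + 1)) (y (j.val + 1))) :
    ∀ (i : Fin k) (b : Y),
      |(C.updateCol i fun p : Fin k => f (x (p.val + 1)) b).det| ≤
        2 ^ (k - 1 - i.val) * |C.det| := by
  intro i b
  obtain rfl := eq_acaResidual f x y hr0 hrec
  have hW := acaPivotRowMatrix_isUpperTriangular hpiv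
  have hdiag := acaPivotRowMatrix_apply_self hpiv
  have hbound := abs_det_updateCol_le_two_pow hW hdiag
    (fun m q => abs_acaPivotRow_le_one (hrule m m.isLt _))
    (fun m => abs_acaPivotRow_le_one (hrule m m.isLt b)) i
  rw [hC, ← acaPivotColMatrix_mul_acaPivotRowMatrix hpiv, ← acaPivotColMatrix_mulVec hpiv b,
    ← mul_updateCol, det_mul, det_mul, det_eq_one_of_isUpperTriangular hW hdiag, mul_one,
    abs_mul, mul_comm]
  gcongr
end
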